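/- arXiv:1902.02080 — 3 statements merged into one kernel-verified Lean document; each statement's English description precedes it below -/
import Mathlib

section
/- Let k ∈ ℕ, A ∈ ℝ^{k×k} symmetric positive semidefinite, and Γ = diag(γ₁,...,γ_k) with γ_i ∈ (0,1). If ‖ΓAΓ‖_{2→2} ≤ 1, then the only solution x ∈ (-1,1)^k of the system of equations Γ²·artanh(x) = Γ²AΓ²x (where artanh is applied componentwise) is x = 0. -/
/-!
Pair the equation with `x`. The left side becomes `∑ γᵢ² xᵢ artanh xᵢ`, and the right side is the
quadratic form of `ΓAΓ` at `Γx`, hence at most `‖Γx‖² = ∑ γᵢ² xᵢ²`. The power series of `artanh`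
gives `t artanh t ≥ t² + t⁴/3` on `(-1, 1)`, so `∑ γᵢ² xᵢ⁴ ≤ 0` and `x = 0`.
-/

noncomputable def artanh (x : ℝ) : ℝ := (1/2) * Real.log ((1+x)/(1-x))

noncomputable def Lstar (x : ℝ) : ℝ :=
  (1/2)*(1+x)*Real.log (1+x) + (1/2)*(1-x)*Real.log (1-x)

noncomputable def opNorm2 {k : ℕ} (M : Matrix (Fin k) (Fin k) ℝ) : ℝ :=
  ‖Matrix.toEuclideanCLM (𝕜 := ℝ) M‖

open Matrix

theorem hasSum_mul_artanh {t : ℝ} (ht : t ∈ Set.Ioo (-1 : ℝ) 1) :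
    HasSum (fun k : ℕ => (t ^ 2) ^ (k + 1) / (2 * k + 1)) (t * artanh t) := by
  have hterm : (fun k : ℕ => (t ^ 2) ^ (k + 1) / (2 * k + 1)) =
      fun k : ℕ => t / 2 * (2 * (1 / (2 * k + 1)) * t ^ (2 * k + 1)) := by
    ext k
    ring
  have hsum : t * artanh t = t / 2 * (Real.log (1 + t) - Real.log (1 - t)) := by
    rw [artanh, Real.log_div (by linarith [ht.1]) (by linarith [ht.2])]
    ring
  rw [hterm, hsum]
  exact (Real.hasSum_log_sub_log_of_abs_lt_one (abs_lt.mpr ht)).mul_left (t / 2)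

theorem sq_add_pow_four_div_three_le_mul_artanh {t : ℝ} (ht : t ∈ Set.Ioo (-1 : ℝ) 1) :
    t ^ 2 + t ^ 4 / 3 ≤ t * artanh t := by
  have h := sum_le_hasSum (Finset.range 2) (fun k _ => by positivity) (hasSum_mul_artanh ht)
  norm_num [Finset.sum_range_succ] at h
  linarith

theorem dotProduct_mulVec_le_norm_toEuclideanCLM_mul {n : Type*} [Fintype n] [DecidableEq n]
    (M : Matrix n n ℝ) (u : n → ℝ) :
    u ⬝ᵥ M *ᵥ u ≤ ‖toEuclideanCLM (𝕜 := ℝ) M‖ * (u ⬝ᵥ u) := by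
  set v : EuclideanSpace ℝ n := WithLp.toLp 2 u
  have hinner : inner ℝ v (toEuclideanCLM (𝕜 := ℝ) M v) = u ⬝ᵥ M *ᵥ u := by
    rw [toEuclideanCLM_toLp, EuclideanSpace.inner_eq_star_dotProduct]
    simp [v, dotProduct_comm]
  have hnorm : ‖v‖ ^ 2 = u ⬝ᵥ u := by
    rw [← real_inner_self_eq_norm_sq, EuclideanSpace.inner_eq_star_dotProduct]
    simp [v]
  calc u ⬝ᵥ M *ᵥ u = inner ℝ v (toEuclideanCLM (𝕜 := ℝ) M v) := hinner.symm
    _ ≤ ‖v‖ * ‖toEuclideanCLM (𝕜 := ℝ) M v‖ := real_inner_le_norm _ _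
    _ ≤ ‖v‖ * (‖toEuclideanCLM (𝕜 := ℝ) M‖ * ‖v‖) := by gcongr; exact ContinuousLinearMap.le_opNorm _ _
    _ = ‖toEuclideanCLM (𝕜 := ℝ) M‖ * (u ⬝ᵥ u) := by rw [← hnorm]; ring

theorem dotProduct_transpose_mul_mul_mulVec {m n : Type*} [Fintype m] [Fintype n]
    (B : Matrix n m ℝ) (M : Matrix n n ℝ) (x : m → ℝ) :
    x ⬝ᵥ (Bᵀ * M * B) *ᵥ x = (B *ᵥ x) ⬝ᵥ M *ᵥ (B *ᵥ x) := by
  rw [← mulVec_mulVec, ← mulVec_mulVec, dotProduct_mulVec, vecMul_transpose]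

theorem eq_zero_of_sum_mul_artanh_le {ι : Type*} [Fintype ι] {w x : ι → ℝ} (hw : ∀ i, w i ≠ 0)
    (hx : ∀ i, x i ∈ Set.Ioo (-1 : ℝ) 1)
    (hle : ∑ i, w i ^ 2 * (x i * artanh (x i)) ≤ ∑ i, w i ^ 2 * x i ^ 2) :
    x = 0 := by
  have hterm : ∀ i, w i ^ 2 * x i ^ 2 + w i ^ 2 * x i ^ 4 / 3 ≤ w i ^ 2 * (x i * artanh (x i)) :=
    fun i => by
      have := mul_le_mul_of_nonneg_left (sq_add_pow_four_div_three_le_mul_artanh (hx i))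
        (sq_nonneg (w i))
      linarith
  have hsum : ∑ i, w i ^ 2 * x i ^ 4 = 0 := by
    refine le_antisymm ?_ (Finset.sum_nonneg fun i _ => by positivity)
    have := Finset.sum_le_sum fun i (_ : i ∈ Finset.univ) => hterm i
    rw [Finset.sum_add_distrib, ← Finset.sum_div] at this
    linarith
  funext i
  have := (Finset.sum_eq_zero_iff_of_nonneg fun i _ => by positivity).mp hsum i (Finset.mem_univ i)
  simpa [hw i] using this

open Matrix in
theorem stmt5_general (k : ℕ) (A : Matrix (Fin k) (Fin k) ℝ)
    (γ : Fin k → ℝ) (hγ : ∀ i, γ i ∈ Set.Ioo (0 : ℝ) 1)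
    (Γ : Matrix (Fin k) (Fin k) ℝ) (hΓ : Γ = Matrix.diagonal γ)
    (hnorm : opNorm2 (Γ * A * Γ) ≤ 1)
    (x : Fin k → ℝ) (hx : ∀ i, x i ∈ Set.Ioo (-1 : ℝ) 1)
    (hcrit : (Γ * Γ).mulVec (fun i => artanh (x i)) = (Γ * Γ * A * Γ * Γ).mulVec x) :
    x = 0 := by
  subst hΓ
  refine eq_zero_of_sum_mul_artanh_le (fun i => (hγ i).1.ne') hx ?_
  set u := diagonal γ *ᵥ x
  calc ∑ i, γ i ^ 2 * (x i * artanh (x i))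
      = x ⬝ᵥ (diagonal γ * diagonal γ) *ᵥ fun i => artanh (x i) := by
        simp only [diagonal_mul_diagonal, mulVec_diagonal, dotProduct]
        congr 1; ext i; ring
    _ = u ⬝ᵥ (diagonal γ * A * diagonal γ) *ᵥ u := by
        rw [hcrit, ← dotProduct_transpose_mul_mul_mulVec, diagonal_transpose]
        simp only [mul_assoc]
    _ ≤ opNorm2 (diagonal γ * A * diagonal γ) * (u ⬝ᵥ u) :=
        dotProduct_mulVec_le_norm_toEuclideanCLM_mul _ _
    _ ≤ u ⬝ᵥ u := mul_le_of_le_one_left (Finset.sum_nonneg fun i _ => mul_self_nonneg _) hnorm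
    _ = ∑ i, γ i ^ 2 * x i ^ 2 := by
        simp only [u, mulVec_diagonal, dotProduct]
        congr 1; ext i; ring

open Matrix in
theorem stmt5 (k : ℕ) (A : Matrix (Fin k) (Fin k) ℝ) (hA : A.IsSymm)
    (hpsd : A.PosSemidef) (γ : Fin k → ℝ) (hγ : ∀ i, γ i ∈ Set.Ioo (0 : ℝ) 1)
    (Γ : Matrix (Fin k) (Fin k) ℝ) (hΓ : Γ = Matrix.diagonal γ)
    (hnorm : opNorm2 (Γ * A * Γ) ≤ 1)
    (x : Fin k → ℝ) (hx : ∀ i, x i ∈ Set.Ioo (-1 : ℝ) 1)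
    (hcrit : (Γ * Γ).mulVec (fun i => artanh (x i)) = (Γ * Γ * A * Γ * Γ).mulVec x) :
    x = 0 :=
  stmt5_general k A γ hγ Γ hΓ hnorm x hx hcrit
end

section
/- For β > 1, the equation tanh(βm) = m has exactly one solution m* in (0,1), and it is a fixed point with tanh'(βm*)·β = β(1-(m*)²) < 1, i.e. β < 1/(1-(m*)²). -/
open Set Filter Topology

-- Inside this namespace `artanh` is Mathlib's `Real.artanh`, not the top-level `artanh` above.
namespace Real

theorem artanh_eq_half_log_sub {x : ℝ} (hx : x ∈ Ioo (-1) 1) :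
    artanh x = (log (1 + x) - log (1 - x)) / 2 := by
  rw [artanh_eq_half_log (Ioo_subset_Icc_self hx), log_div (by grind) (by grind)]
  ring

theorem hasDerivAt_artanh {x : ℝ} (hx : x ∈ Ioo (-1) 1) :
    HasDerivAt artanh (1 - x ^ 2)⁻¹ x := by
  have hpos : 1 + x ≠ 0 := by grind
  have hneg : 1 - x ≠ 0 := by grind
  have hlog : HasDerivAt (fun y ↦ (log (1 + y) - log (1 - y)) / 2)
      ((1 / (1 + x) - (-1) / (1 - x)) / 2) x :=
    ((((hasDerivAt_id x).const_add 1).log hpos).sub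
      (((hasDerivAt_id x).const_sub 1).log hneg)).div_const 2
  have hval : (1 / (1 + x) - (-1) / (1 - x)) / 2 = (1 - x ^ 2)⁻¹ := by
    rw [show 1 - x ^ 2 = (1 + x) * (1 - x) by ring]
    field_simp
    ring
  rw [← hval]
  refine hlog.congr_of_eventuallyEq ?_
  filter_upwards [Ioo_mem_nhds hx.1 hx.2] with y hy
  exact artanh_eq_half_log_sub hy

theorem strictConvexOn_artanh : StrictConvexOn ℝ (Ico 0 1) artanh := by
  refine StrictMonoOn.strictConvexOn_of_deriv (convex_Ico 0 1) ?_ ?_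
  · exact fun x hx ↦ (hasDerivAt_artanh ⟨by grind, hx.2⟩).continuousAt.continuousWithinAt
  · rw [interior_Ico]
    intro x hx y hy hxy
    rw [(hasDerivAt_artanh ⟨by grind, hx.2⟩).deriv,
      (hasDerivAt_artanh ⟨by grind, hy.2⟩).deriv]
    gcongr
    · nlinarith [hy.1, hy.2]
    · exact hx.1.le

theorem slope_artanh_zero (m : ℝ) : slope artanh 0 m = artanh m / m := by
  rw [slope_def_field, artanh_zero, sub_zero, sub_zero]

theorem tanh_mul_eq_self_iff_slope_artanh_zero {β m : ℝ} (hm : m ∈ Ioo 0 1) :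
    tanh (β * m) = m ↔ slope artanh 0 m = β := by
  rw [slope_artanh_zero, div_eq_iff hm.1.ne']
  constructor
  · intro h
    rw [← artanh_tanh (β * m), h]
  · intro h
    rw [← h, tanh_artanh ⟨by grind, hm.2⟩]

theorem strictMonoOn_slope_artanh_zero : StrictMonoOn (slope artanh 0) (Ioo 0 1) := by
  intro x hx y hy hxy
  simpa only [slope_def_field] using
    strictConvexOn_artanh.secant_strict_mono ⟨le_rfl, one_pos⟩ (Ioo_subset_Ico_self hx)
      (Ioo_subset_Ico_self hy) hx.1.ne' hy.1.ne' hxy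

theorem slope_artanh_zero_lt {m : ℝ} (hm : m ∈ Ioo 0 1) : slope artanh 0 m < (1 - m ^ 2)⁻¹ :=
  strictConvexOn_artanh.slope_lt_of_hasDerivAt ⟨le_rfl, one_pos⟩ (Ioo_subset_Ico_self hm) hm.1
    (hasDerivAt_artanh ⟨by grind, hm.2⟩)

theorem exists_slope_artanh_zero_eq {β : ℝ} (hβ : 1 < β) :
    ∃ m ∈ Ioo 0 1, slope artanh 0 m = β := by
  have hslope₀ : Tendsto (slope artanh 0) (𝓝[>] 0) (𝓝 1) := by
    have := hasDerivAt_iff_tendsto_slope.1 (hasDerivAt_artanh (x := 0) (by norm_num))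
    simpa using this.mono_left (nhdsGT_le_nhdsNE 0)
  have htanh : 0 < tanh β := lt_of_not_ge fun h ↦
    (artanh_nonpos h).not_gt (by rw [artanh_tanh]; linarith)
  obtain ⟨a, ha_lt, ha⟩ :=
    ((hslope₀.eventually (gt_mem_nhds hβ)).and (Ioo_mem_nhdsGT htanh)).exists
  have hcont : ContinuousOn (slope artanh 0) (Icc a (tanh β)) := by
    rw [show slope artanh 0 = fun m ↦ artanh m / m from funext slope_artanh_zero]
    refine ContinuousOn.div (fun x hx ↦ ?_) continuousOn_id fun x hx ↦ (ha.1.trans_le hx.1).ne'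
    have hx1 : x < 1 := hx.2.trans_lt (tanh_lt_one β)
    exact (hasDerivAt_artanh ⟨by grind, hx1⟩).continuousAt.continuousWithinAt
  have hb_gt : β < slope artanh 0 (tanh β) := by
    rw [slope_artanh_zero, artanh_tanh, lt_div_iff₀ htanh]
    nlinarith [tanh_lt_one β]
  obtain ⟨m, hm, hm_eq⟩ := intermediate_value_Icc ha.2.le hcont ⟨ha_lt.le, hb_gt.le⟩
  exact ⟨m, ⟨ha.1.trans_le hm.1, hm.2.trans_lt (tanh_lt_one β)⟩, hm_eq⟩

end Real

theorem stmt8 (β : ℝ) (hβ : 1 < β) :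
    (∃! m : ℝ, m ∈ Set.Ioo (0 : ℝ) 1 ∧ Real.tanh (β * m) = m) ∧
    ∀ m ∈ Set.Ioo (0 : ℝ) 1, Real.tanh (β * m) = m → β * (1 - m ^ 2) < 1 := by
  refine ⟨?_, fun m hm hfix ↦ ?_⟩
  · obtain ⟨m, hm, hslope⟩ := Real.exists_slope_artanh_zero_eq hβ
    refine ⟨m, ⟨hm, (Real.tanh_mul_eq_self_iff_slope_artanh_zero hm).2 hslope⟩, ?_⟩
    rintro m' ⟨hm', hfix'⟩
    exact Real.strictMonoOn_slope_artanh_zero.injOn hm' hm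
      (((Real.tanh_mul_eq_self_iff_slope_artanh_zero hm').1 hfix').trans hslope.symm)
  · have hβ_lt : β < (1 - m ^ 2)⁻¹ :=
      (Real.tanh_mul_eq_self_iff_slope_artanh_zero hm).1 hfix ▸ Real.slope_artanh_zero_lt hm
    have hpos : 0 < 1 - m ^ 2 := by nlinarith [hm.1, hm.2]
    rwa [← one_div, lt_div_iff₀ hpos] at hβ_lt
end

section
/- Let k ≥ 2 and A ∈ ℝ^{k×k} symmetric with positive off-diagonal entries, A_{ii} = c₁ and Σ_{j≠i}A_{ij} = c₂ for all i, with c₁ + c₂ > k. Then the global maximizers over [-1,1]^k of I(x) = (1/(2k²))⟨x,Ax⟩ - (1/k)Σ_i L*(x_i) are exactly the two points m*(1,...,1) and -m*(1,...,1), where m* ∈ (0,1) is the unique positive solution of artanh(m) = ((c₁+c₂)/k)·m. -/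
open Matrix Set

lemma artanh_zero : artanh 0 = 0 := by simp [artanh]

lemma hasDerivAt_artanh {x : ℝ} (hx : x ∈ Ioo (-1) 1) :
    HasDerivAt artanh (1 / (1 - x ^ 2)) x := by
  obtain ⟨h₁, h₂⟩ := hx
  have hp : 0 < 1 + x := by linarith
  have hn : 0 < 1 - x := by linarith
  have hq : HasDerivAt (fun t => (1 + t) / (1 - t))
      ((1 * (1 - x) - (1 + x) * -1) / (1 - x) ^ 2) x :=
    ((hasDerivAt_id' x).const_add 1).div ((hasDerivAt_id' x).const_sub 1) hn.ne'
  refine ((hq.log (div_pos hp hn).ne').const_mul (1 / 2)).congr_deriv ?_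
  rw [show 1 - x ^ 2 = (1 + x) * (1 - x) by ring]
  field_simp
  ring

lemma strictConvexOn_artanh : StrictConvexOn ℝ (Ico 0 1) artanh := by
  refine StrictMonoOn.strictConvexOn_of_deriv (convex_Ico 0 1) (fun x hx => ?_) ?_
  · exact (hasDerivAt_artanh ⟨by linarith [hx.1], hx.2⟩).continuousAt.continuousWithinAt
  · rw [interior_Ico]
    intro x hx y hy hxy
    rw [(hasDerivAt_artanh ⟨by linarith [hx.1], hx.2⟩).deriv,
      (hasDerivAt_artanh ⟨by linarith [hy.1], hy.2⟩).deriv]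
    exact one_div_lt_one_div_of_lt (by nlinarith [hy.1, hy.2]) (by nlinarith [hx.1])

lemma strictMonoOn_artanh_div : StrictMonoOn (fun t => artanh t / t) (Ioo 0 1) := by
  intro x hx y hy hxy
  simpa [artanh_zero] using strictConvexOn_artanh.secant_strict_mono ⟨le_rfl, zero_lt_one⟩
    (Ioo_subset_Ico_self hx) (Ioo_subset_Ico_self hy) hx.1.ne' hy.1.ne' hxy

lemma Lstar_neg (x : ℝ) : Lstar (-x) = Lstar x := by
  simp only [Lstar, sub_neg_eq_add, ← sub_eq_add_neg]
  ring

lemma Lstar_eq (x : ℝ) :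
    Lstar x = ((1 + x) * Real.log (1 + x) + (1 - x) * Real.log (1 - x)) / 2 := by
  unfold Lstar; ring

lemma continuous_Lstar : Continuous Lstar := by
  rw [funext Lstar_eq]
  exact ((Real.continuous_mul_log.comp (continuous_const_add 1)).add
    (Real.continuous_mul_log.comp (continuous_sub_left 1))).div_const 2

lemma hasDerivAt_Lstar {x : ℝ} (hx : x ∈ Ioo (-1) 1) : HasDerivAt Lstar (artanh x) x := by
  obtain ⟨h₁, h₂⟩ := hx
  have hp := (Real.hasDerivAt_mul_log (by linarith : 1 + x ≠ 0)).comp x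
    ((hasDerivAt_id' x).const_add 1)
  have hn := (Real.hasDerivAt_mul_log (by linarith : 1 - x ≠ 0)).comp x
    ((hasDerivAt_id' x).const_sub 1)
  rw [funext Lstar_eq]
  refine ((hp.add hn).div_const 2).congr_deriv ?_
  rw [artanh, Real.log_div (by linarith) (by linarith)]
  ring

noncomputable def meanFieldProfile (a t : ℝ) : ℝ := a / 2 * t ^ 2 - Lstar t

section meanFieldProfile

variable {a m t : ℝ}

lemma meanFieldProfile_abs (a t : ℝ) : meanFieldProfile a |t| = meanFieldProfile a t := by
  rcases abs_choice t with h | h <;> simp only [meanFieldProfile, h, Lstar_neg, neg_sq]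

lemma continuous_meanFieldProfile (a : ℝ) : Continuous (meanFieldProfile a) :=
  (continuous_const.mul (continuous_pow 2)).sub continuous_Lstar

lemma hasDerivAt_meanFieldProfile (ht : t ∈ Ioo (-1) 1) :
    HasDerivAt (meanFieldProfile a) (a * t - artanh t) t := by
  refine (((hasDerivAt_pow 2 t).const_mul (a / 2)).sub (hasDerivAt_Lstar ht)).congr_deriv ?_
  push_cast
  ring

variable (hm : m ∈ Ioo 0 1) (hmeq : artanh m = a * m)
include hm hmeq

lemma meanFieldProfile_lt_of_nonneg (ht₀ : 0 ≤ t) (ht₁ : t ≤ 1) (htm : t ≠ m) :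
    meanFieldProfile a t < meanFieldProfile a m := by
  have ha : a = artanh m / m := by rw [hmeq, mul_div_cancel_right₀ _ hm.1.ne']
  rcases htm.lt_or_gt with htm | htm
  · refine strictMonoOn_of_deriv_pos (convex_Icc 0 m)
      (continuous_meanFieldProfile a).continuousOn (fun u hu => ?_)
      ⟨ht₀, htm.le⟩ ⟨hm.1.le, le_rfl⟩ htm
    rw [interior_Icc] at hu
    have hu₁ : u < 1 := hu.2.trans hm.2
    rw [(hasDerivAt_meanFieldProfile ⟨by linarith [hu.1], hu₁⟩).deriv, sub_pos, ha,
      ← div_lt_iff₀ hu.1]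
    exact strictMonoOn_artanh_div ⟨hu.1, hu₁⟩ hm hu.2
  · refine strictAntiOn_of_deriv_neg (convex_Icc m 1)
      (continuous_meanFieldProfile a).continuousOn (fun u hu => ?_)
      ⟨le_rfl, hm.2.le⟩ ⟨htm.le, ht₁⟩ htm
    rw [interior_Icc] at hu
    have hu₀ : 0 < u := hm.1.trans hu.1
    rw [(hasDerivAt_meanFieldProfile ⟨by linarith, hu.2⟩).deriv, sub_neg, ha,
      ← lt_div_iff₀ hu₀]
    exact strictMonoOn_artanh_div hm ⟨hu₀, hu.2⟩ hu.1

lemma meanFieldProfile_lt (ht : t ∈ Icc (-1) 1) (htm : t ≠ m) (htm' : t ≠ -m) :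
    meanFieldProfile a t < meanFieldProfile a m := by
  rw [← meanFieldProfile_abs]
  refine meanFieldProfile_lt_of_nonneg hm hmeq (abs_nonneg t) (abs_le.2 ht) fun h => ?_
  rcases (abs_eq hm.1.le).1 h with h | h <;> contradiction

lemma meanFieldProfile_le (ht : t ∈ Icc (-1) 1) :
    meanFieldProfile a t ≤ meanFieldProfile a m := by
  by_cases htm : t = m
  · rw [htm]
  by_cases htm' : t = -m
  · rw [htm', ← meanFieldProfile_abs, abs_neg, abs_of_pos hm.1]
  exact (meanFieldProfile_lt hm hmeq ht htm htm').le

end meanFieldProfile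

section freeEnergy

variable {ι : Type*} {A : Matrix ι ι ℝ} {s : ℝ}

lemma mul_sub_sq_nonneg (hA : ∀ i j, i ≠ j → 0 ≤ A i j) (z : ι → ℝ) (i j : ι) :
    0 ≤ A i j * (z i - z j) ^ 2 := by
  rcases eq_or_ne i j with rfl | hij
  · simp
  · exact mul_nonneg (hA i j hij) (sq_nonneg _)

variable [Fintype ι]

lemma sum_mul_sub_sq_eq (hA : A.IsSymm) (hrow : ∀ i, ∑ j, A i j = s) (z : ι → ℝ) :
    ∑ i, ∑ j, A i j * (z i - z j) ^ 2 = 2 * (s * ∑ i, z i ^ 2 - z ⬝ᵥ A *ᵥ z) := by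
  have hcol : ∀ j, ∑ i, A i j = s := fun j => by simpa only [hA.apply] using hrow j
  have hdiag : ∑ i, ∑ j, A i j * z i ^ 2 = s * ∑ i, z i ^ 2 := by
    simp only [← Finset.sum_mul, hrow, Finset.mul_sum]
  have hdiag' : ∑ i, ∑ j, A i j * z j ^ 2 = s * ∑ i, z i ^ 2 := by
    rw [Finset.sum_comm]
    simp only [← Finset.sum_mul, hcol, Finset.mul_sum]
  have hquad : z ⬝ᵥ A *ᵥ z = ∑ i, ∑ j, A i j * (z i * z j) := by
    simp only [dotProduct, mulVec, Finset.mul_sum]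
    exact Finset.sum_congr rfl fun i _ => Finset.sum_congr rfl fun j _ => by ring
  calc ∑ i, ∑ j, A i j * (z i - z j) ^ 2
      = ∑ i, ∑ j, (A i j * z i ^ 2 + A i j * z j ^ 2 - 2 * (A i j * (z i * z j))) :=
        Finset.sum_congr rfl fun i _ => Finset.sum_congr rfl fun j _ => by ring
    _ = ∑ i, ∑ j, A i j * z i ^ 2 + ∑ i, ∑ j, A i j * z j ^ 2
          - 2 * ∑ i, ∑ j, A i j * (z i * z j) := by
        simp only [Finset.sum_add_distrib, Finset.sum_sub_distrib, ← Finset.mul_sum]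
    _ = 2 * (s * ∑ i, z i ^ 2 - z ⬝ᵥ A *ᵥ z) := by
        rw [hdiag, hdiag', hquad]
        ring

lemma sum_mul_sub_sq_nonneg (hA : ∀ i j, i ≠ j → 0 ≤ A i j) (z : ι → ℝ) :
    0 ≤ ∑ i, ∑ j, A i j * (z i - z j) ^ 2 :=
  Finset.sum_nonneg fun i _ => Finset.sum_nonneg fun j _ => mul_sub_sq_nonneg hA z i j

lemma sum_mul_sub_sq_pos (hA : ∀ i j, i ≠ j → 0 < A i j) {z : ι → ℝ} {i j : ι}
    (hz : z i ≠ z j) : 0 < ∑ i, ∑ j, A i j * (z i - z j) ^ 2 := by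
  have hA' : ∀ i j, i ≠ j → 0 ≤ A i j := fun i j hij => (hA i j hij).le
  have hij : 0 < A i j * (z i - z j) ^ 2 :=
    mul_pos (hA i j (ne_of_apply_ne z hz)) (by positivity [sub_ne_zero.2 hz])
  exact Finset.sum_pos' (fun i _ => Finset.sum_nonneg fun j _ => mul_sub_sq_nonneg hA' z i j)
    ⟨i, Finset.mem_univ i, Finset.sum_pos' (fun j _ => mul_sub_sq_nonneg hA' z i j)
      ⟨j, Finset.mem_univ j, hij⟩⟩

noncomputable def meanFieldFreeEnergy (A : Matrix ι ι ℝ) (z : ι → ℝ) : ℝ :=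
  1 / (2 * (Fintype.card ι : ℝ) ^ 2) * (z ⬝ᵥ A *ᵥ z) - 1 / Fintype.card ι * ∑ i, Lstar (z i)

variable [Nonempty ι]

lemma meanFieldFreeEnergy_eq (hA : A.IsSymm) (hrow : ∀ i, ∑ j, A i j = s) (z : ι → ℝ) :
    meanFieldFreeEnergy A z =
      (∑ i, meanFieldProfile (s / Fintype.card ι) (z i)) / Fintype.card ι
        - (∑ i, ∑ j, A i j * (z i - z j) ^ 2) / (4 * Fintype.card ι ^ 2) := by
  rw [sum_mul_sub_sq_eq hA hrow]
  simp only [meanFieldFreeEnergy, meanFieldProfile, Finset.sum_sub_distrib, ← Finset.mul_sum]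
  field_simp
  ring

lemma meanFieldFreeEnergy_le (hA : A.IsSymm) (hA' : ∀ i j, i ≠ j → 0 ≤ A i j)
    (hrow : ∀ i, ∑ j, A i j = s) (z : ι → ℝ) :
    meanFieldFreeEnergy A z ≤
      (∑ i, meanFieldProfile (s / Fintype.card ι) (z i)) / Fintype.card ι := by
  rw [meanFieldFreeEnergy_eq hA hrow, sub_le_self_iff]
  exact div_nonneg (sum_mul_sub_sq_nonneg hA' z) (by positivity)

lemma meanFieldFreeEnergy_lt (hA : A.IsSymm) (hpos : ∀ i j, i ≠ j → 0 < A i j)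
    (hrow : ∀ i, ∑ j, A i j = s) {z : ι → ℝ} {i j : ι} (hz : z i ≠ z j) :
    meanFieldFreeEnergy A z <
      (∑ i, meanFieldProfile (s / Fintype.card ι) (z i)) / Fintype.card ι := by
  rw [meanFieldFreeEnergy_eq hA hrow, sub_lt_self_iff]
  exact div_pos (sum_mul_sub_sq_pos hpos hz) (by positivity)

lemma meanFieldFreeEnergy_const (hrow : ∀ i, ∑ j, A i j = s) (c : ℝ) :
    meanFieldFreeEnergy A (fun _ => c) = meanFieldProfile (s / Fintype.card ι) c := by
  simp only [meanFieldFreeEnergy, meanFieldProfile, dotProduct, mulVec, ← Finset.sum_mul, hrow,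
    Finset.sum_const, Finset.card_univ, nsmul_eq_mul]
  field_simp

lemma sum_meanFieldProfile_div_card_le {a m : ℝ} (hm : m ∈ Ioo 0 1) (hmeq : artanh m = a * m)
    {y : ι → ℝ} (hy : ∀ i, y i ∈ Icc (-1) 1) :
    (∑ i, meanFieldProfile a (y i)) / Fintype.card ι ≤ meanFieldProfile a m := by
  have hsum := Finset.sum_le_card_nsmul Finset.univ (fun i => meanFieldProfile a (y i)) _
    fun i _ => meanFieldProfile_le hm hmeq (hy i)
  rw [Finset.card_univ, nsmul_eq_mul] at hsum
  rw [div_le_iff₀ (by positivity)]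
  linarith

theorem forall_meanFieldFreeEnergy_le_iff {m : ℝ} (hA : A.IsSymm)
    (hpos : ∀ i j, i ≠ j → 0 < A i j) (hrow : ∀ i, ∑ j, A i j = s) (hm : m ∈ Ioo 0 1)
    (hmeq : artanh m = s / Fintype.card ι * m) {x : ι → ℝ} (hx : ∀ i, x i ∈ Icc (-1) 1) :
    (∀ y : ι → ℝ, (∀ i, y i ∈ Icc (-1) 1) → meanFieldFreeEnergy A y ≤ meanFieldFreeEnergy A x)
      ↔ x = (fun _ => m) ∨ x = fun _ => -m := by
  have hle : ∀ y : ι → ℝ, (∀ i, y i ∈ Icc (-1) 1) →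
      meanFieldFreeEnergy A y ≤ meanFieldProfile (s / Fintype.card ι) m := fun y hy =>
    (meanFieldFreeEnergy_le hA (fun i j hij => (hpos i j hij).le) hrow y).trans
      (sum_meanFieldProfile_div_card_le hm hmeq hy)
  constructor
  · intro hmax
    have hge : meanFieldProfile (s / Fintype.card ι) m ≤ meanFieldFreeEnergy A x := by
      simpa [meanFieldFreeEnergy_const hrow] using hmax _ fun _ => ⟨by linarith [hm.1], hm.2.le⟩
    obtain ⟨i₀⟩ := ‹Nonempty ι›
    obtain ⟨c, rfl⟩ : ∃ c, x = fun _ => c := by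
      refine ⟨x i₀, funext fun j => by_contra fun hj => ?_⟩
      exact (hge.trans_lt ((meanFieldFreeEnergy_lt hA hpos hrow hj).trans_le
        (sum_meanFieldProfile_div_card_le hm hmeq hx))).false
    rw [meanFieldFreeEnergy_const hrow] at hge
    have hc : c = m ∨ c = -m := by
      by_contra! h
      exact (meanFieldProfile_lt hm hmeq (hx i₀) h.1 h.2).not_ge hge
    rcases hc with rfl | rfl <;> simp
  · rintro (rfl | rfl) y hy
    · rw [meanFieldFreeEnergy_const hrow]
      exact hle y hy
    · rw [meanFieldFreeEnergy_const hrow, ← meanFieldProfile_abs, abs_neg, abs_of_pos hm.1]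
      exact hle y hy

end freeEnergy

open Matrix in
theorem stmt12_general (k : ℕ) (hk : 2 ≤ k) (A : Matrix (Fin k) (Fin k) ℝ) (hA : A.IsSymm)
    (hpos : ∀ i j, i ≠ j → 0 < A i j) (c₁ c₂ : ℝ)
    (hd : ∀ i, A i i = c₁)
    (hoff : ∀ i, ∑ j ∈ Finset.univ.filter (fun j => j ≠ i), A i j = c₂)
    (m : ℝ) (hm : m ∈ Set.Ioo (0 : ℝ) 1)
    (hmeq : artanh m = ((c₁ + c₂) / k) * m)
    (I : (Fin k → ℝ) → ℝ)
    (hI : I = fun z => (1 / (2 * (k : ℝ) ^ 2)) * (z ⬝ᵥ A.mulVec z)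
      - (1 / (k : ℝ)) * ∑ i, Lstar (z i)) :
    ∀ x : Fin k → ℝ, (∀ i, x i ∈ Set.Icc (-1 : ℝ) 1) →
      ((∀ y : Fin k → ℝ, (∀ i, y i ∈ Set.Icc (-1 : ℝ) 1) → I y ≤ I x)
        ↔ (x = fun _ => m) ∨ (x = fun _ => -m)) := by
  intro x hx
  have : Nonempty (Fin k) := ⟨⟨0, by omega⟩⟩
  have hrow : ∀ i, ∑ j, A i j = c₁ + c₂ := fun i => by
    rw [← Finset.add_sum_erase _ _ (Finset.mem_univ i), hd, ← hoff i, Finset.filter_ne']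
  have hI' : I = meanFieldFreeEnergy A := by
    subst hI
    funext z
    simp [meanFieldFreeEnergy]
  subst hI'
  exact forall_meanFieldFreeEnergy_le_iff hA hpos hrow hm (by simpa using hmeq) hx

open Matrix in
theorem stmt12 (k : ℕ) (hk : 2 ≤ k) (A : Matrix (Fin k) (Fin k) ℝ) (hA : A.IsSymm)
    (hpos : ∀ i j, i ≠ j → 0 < A i j) (c₁ c₂ : ℝ)
    (hd : ∀ i, A i i = c₁)
    (hoff : ∀ i, ∑ j ∈ Finset.univ.filter (fun j => j ≠ i), A i j = c₂)
    (hc : c₁ + c₂ > k)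
    (m : ℝ) (hm : m ∈ Set.Ioo (0 : ℝ) 1)
    (hmeq : artanh m = ((c₁ + c₂) / k) * m)
    (I : (Fin k → ℝ) → ℝ)
    (hI : I = fun z => (1 / (2 * (k : ℝ) ^ 2)) * (z ⬝ᵥ A.mulVec z)
      - (1 / (k : ℝ)) * ∑ i, Lstar (z i)) :
    ∀ x : Fin k → ℝ, (∀ i, x i ∈ Set.Icc (-1 : ℝ) 1) →
      ((∀ y : Fin k → ℝ, (∀ i, y i ∈ Set.Icc (-1 : ℝ) 1) → I y ≤ I x)
        ↔ (x = fun _ => m) ∨ (x = fun _ => -m)) :=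
  stmt12_general k hk A hA hpos c₁ c₂ hd hoff m hm hmeq I hI
end
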